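/- Let n ≥ 1, w ∈ S_n and 1 ≤ i ≤ n−1. If ℓ(w s_i) = ℓ(w) − 1, then ∂^x_i 𝔖_w(x,t) = 𝔖_{w s_i}(x,t); if ℓ(w s_i) = ℓ(w) + 1, then ∂^x_i 𝔖_w(x,t) = 0. Here ∂^x_i is the Demazure operator in the x-variables and 𝔖_w(x,t) is the double Schubert polynomial of w. -/

import Mathlib

open MvPolynomial
open scoped Classical

/-- The Coxeter length of a permutation of `Fin n`, i.e. its number of inversions. -/
def permLen {n : ℕ} (w : Equiv.Perm (Fin n)) : ℕ :=
  (Finset.univ.filter (fun p : Fin n × Fin n => p.1 < p.2 ∧ w p.2 < w p.1)).card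

/-- The adjacent transposition `s_i` exchanging the `i`-th and `(i+1)`-th letters
(zero-indexed); junk value `1` if out of range. -/
def adjSwap (n : ℕ) (i : ℕ) : Equiv.Perm (Fin n) :=
  if h : i + 1 < n then Equiv.swap ⟨i, Nat.lt_of_succ_lt h⟩ ⟨i + 1, h⟩ else 1

/-- The longest element `w₀` of the symmetric group on `Fin n`, `i ↦ n - 1 - i`
(one-indexed: `i ↦ n + 1 - i`). -/
def w0 (n : ℕ) : Equiv.Perm (Fin n) := Fin.revPerm

/-- The Demazure (divided difference) operator with respect to a pair of variables `i j`:
`f ↦ (f - swap(i,j)·f) / (Xᵢ - Xⱼ)`.  The difference is always divisible by `Xᵢ - Xⱼ`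
(for `i ≠ j`), and the quotient is unique since the polynomial ring is a domain, so the
definition by choice below produces exactly this quotient. -/
noncomputable def demazure {σ : Type} [DecidableEq σ] (i j : σ)
    (f : MvPolynomial σ ℚ) : MvPolynomial σ ℚ :=
  if h : ∃ g, f - rename (Equiv.swap i j) f = (X i - X j) * g then h.choose else 0

/-- The Demazure operator `∂ᵢ` on `ℚ[x₀, …, x_{n-1}]` (zero-indexed). -/
noncomputable def demAt (n : ℕ) (i : ℕ) :
    MvPolynomial (Fin n) ℚ → MvPolynomial (Fin n) ℚ :=
  if h : i + 1 < n then demazure ⟨i, Nat.lt_of_succ_lt h⟩ ⟨i + 1, h⟩ else fun _ => 0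

/-- The composite Demazure operator `∂_{i₁} ∘ ⋯ ∘ ∂_{i_r}` along a word `l = [i₁, …, i_r]`. -/
noncomputable def demWord (n : ℕ) (l : List ℕ) :
    MvPolynomial (Fin n) ℚ → MvPolynomial (Fin n) ℚ :=
  l.foldr (fun i op => demAt n i ∘ op) id

/-- `l = [i₁, …, i_r]` is a reduced word for `w` if all letters are in range,
`s_{i₁} ⋯ s_{i_r} = w`, and `r = ℓ(w)` is the number of inversions of `w`. -/
def IsReducedWord (n : ℕ) (w : Equiv.Perm (Fin n)) (l : List ℕ) : Prop :=
  (∀ i ∈ l, i + 1 < n) ∧ (l.map (adjSwap n)).prod = w ∧ l.length = permLen w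

/-- The Demazure operator `∂_w`, defined along a chosen reduced word of `w`
(the result is independent of this choice). -/
noncomputable def demazureOf (n : ℕ) (w : Equiv.Perm (Fin n)) :
    MvPolynomial (Fin n) ℚ → MvPolynomial (Fin n) ℚ :=
  if h : ∃ l, IsReducedWord n w l then demWord n h.choose else fun _ => 0

/-- The Demazure operator `∂ᵢˣ` acting on the `x`-variables (the left summand) of
`ℚ[x₁, …, xₙ, t₁, …, tₙ]`. -/
noncomputable def demAtX (n : ℕ) (i : ℕ) :
    MvPolynomial (Fin n ⊕ Fin n) ℚ → MvPolynomial (Fin n ⊕ Fin n) ℚ :=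
  if h : i + 1 < n then
    demazure (Sum.inl ⟨i, Nat.lt_of_succ_lt h⟩) (Sum.inl ⟨i + 1, h⟩) else fun _ => 0

/-- Composite of `x`-variable Demazure operators along a word. -/
noncomputable def demWordX (n : ℕ) (l : List ℕ) :
    MvPolynomial (Fin n ⊕ Fin n) ℚ → MvPolynomial (Fin n ⊕ Fin n) ℚ :=
  l.foldr (fun i op => demAtX n i ∘ op) id

/-- The Demazure operator `∂_wˣ` in the `x`-variables, along a chosen reduced word of `w`. -/
noncomputable def demazureOfX (n : ℕ) (w : Equiv.Perm (Fin n)) :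
    MvPolynomial (Fin n ⊕ Fin n) ℚ → MvPolynomial (Fin n ⊕ Fin n) ℚ :=
  if h : ∃ l, IsReducedWord n w l then demWordX n h.choose else fun _ => 0

/-- The top product `∏_{i + j ≤ n} (xᵢ - tⱼ)` (one-indexed), i.e. the double Schubert
polynomial of the longest element. -/
noncomputable def schubProd (n : ℕ) : MvPolynomial (Fin n ⊕ Fin n) ℚ :=
  ∏ p ∈ Finset.univ.filter (fun p : Fin n × Fin n => (p.1 : ℕ) + (p.2 : ℕ) + 2 ≤ n),
    (X (Sum.inl p.1) - X (Sum.inr p.2))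

/-- The double Schubert polynomial `𝔖_w(x, t) = ∂ˣ_{w⁻¹w₀} (∏_{i+j≤n} (xᵢ - tⱼ))`. -/
noncomputable def schubert (n : ℕ) (w : Equiv.Perm (Fin n)) :
    MvPolynomial (Fin n ⊕ Fin n) ℚ :=
  demazureOfX n (w⁻¹ * w0 n) (schubProd n)

/-!
Any two reduced words of a permutation give the same composite of Demazure operators: by
induction on the length, two reduced words of `w` with distinct first letters `i`, `j` (both left
descents of `w`) can be joined through reduced words beginning with `i j` and `j i` (if
`|i - j| ≥ 2`) or with `i (i+1) i` and `(i+1) i (i+1)` (if `j = i + 1`), and the Demazure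
operators satisfy the corresponding commutation and braid relations. So `∂ˣ_u` may be computed
along any reduced word.

For `u = w⁻¹ w₀` we have `(w sᵢ)⁻¹ w₀ = sᵢ u`, and `ℓ(w sᵢ) < ℓ(w)` exactly when `ℓ(sᵢ u) > ℓ(u)`.
If `ℓ(w sᵢ) = ℓ(w) - 1`, prefixing `i` to a reduced word of `u` gives one of `sᵢ u`, whence
`∂ᵢ 𝔖_w = 𝔖_{w sᵢ}`. If `ℓ(w sᵢ) = ℓ(w) + 1`, `u` has a reduced word starting with `i`, and
`∂ᵢ ∘ ∂ᵢ = 0`.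
-/

theorem Equiv.swap_mul_swap_mul_swap_braid {α : Type*} [DecidableEq α] {a b c : α}
    (hab : a ≠ b) (hac : a ≠ c) (hbc : b ≠ c) :
    Equiv.swap a b * Equiv.swap b c * Equiv.swap a b
      = Equiv.swap b c * Equiv.swap a b * Equiv.swap b c := by
  rw [Equiv.swap_comm b c, Equiv.swap_comm a b, Equiv.swap_mul_swap_mul_swap hbc.symm hac.symm,
    Equiv.swap_comm c b, Equiv.swap_comm b a, Equiv.swap_mul_swap_mul_swap hab hac, Equiv.swap_comm]

theorem Equiv.swap_lt_swap_iff_of_covBy {α : Type*} [LinearOrder α] {a b x y : α}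
    (hab : a ⋖ b) (hxy : x < y) :
    Equiv.swap a b x < Equiv.swap a b y ↔ ¬(x = a ∧ y = b) := by
  have hxa : x < b → x ≤ a := hab.le_of_lt
  have hya : y < b → y ≤ a := hab.le_of_lt
  have hxb : a < x → b ≤ x := hab.ge_of_gt
  have hyb : a < y → b ≤ y := hab.ge_of_gt
  have := hab.lt
  simp only [Equiv.swap_apply_def]
  split_ifs <;> grind

namespace Equiv.Perm

lemma eq_one_of_strictMono {α : Type*} [LinearOrder α] [WellFoundedLT α] {w : Equiv.Perm α}
    (hw : StrictMono w) : w = 1 :=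
  Equiv.coe_fn_injective <| (hw.range_inj strictMono_id).mp (by simp)

lemma exists_apply_add_one_lt_of_ne_one {n : ℕ} {w : Equiv.Perm (Fin n)} (hw : w ≠ 1) :
    ∃ i, ∃ hi : i + 1 < n, w ⟨i + 1, hi⟩ < w ⟨i, by omega⟩ := by
  by_contra! hmono
  refine hw (eq_one_of_strictMono ?_)
  cases n with
  | zero => exact fun x => x.elim0
  | succ m =>
    refine Fin.strictMono_iff_lt_succ.mpr fun j => (hmono j (by omega)).lt_of_ne ?_
    exact w.injective.ne (by simp [Fin.ext_iff])

end Equiv.Perm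

lemma Fin.mk_covBy_mk_add_one {n i : ℕ} (hi : i + 1 < n) :
    (⟨i, by omega⟩ : Fin n) ⋖ ⟨i + 1, hi⟩ :=
  ⟨Fin.mk_lt_mk.mpr (by omega), fun c h₁ h₂ => by simp only [Fin.lt_def] at h₁ h₂; omega⟩

section Demazure

variable {σ : Type} [DecidableEq σ]

lemma rename_swap_rename_swap {R : Type*} [CommSemiring R] (a b : σ) (f : MvPolynomial σ R) :
    rename (Equiv.swap a b) (rename (Equiv.swap a b) f) = f := by
  rw [rename_rename, ← Equiv.coe_trans, Equiv.swap_swap, Equiv.coe_refl, rename_id_apply]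

omit [DecidableEq σ] in
lemma X_sub_X_ne_zero {R : Type*} [CommRing R] [Nontrivial R] {a b : σ} (hab : a ≠ b) :
    (X a - X b : MvPolynomial σ R) ≠ 0 :=
  sub_ne_zero.mpr ((X_injective (R := R)).ne hab)

lemma X_sub_X_dvd_sub_rename_swap {R : Type*} [CommRing R] (a b : σ) (f : MvPolynomial σ R) :
    X a - X b ∣ f - rename (Equiv.swap a b) f := by
  induction f using MvPolynomial.induction_on with
  | C c => simp
  | add p q hp hq =>
    rw [map_add, add_sub_add_comm]
    exact dvd_add hp hq
  | mul_X p k hp =>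
    have hk : X a - X b ∣ (X k - X (Equiv.swap a b k) : MvPolynomial σ R) := by
      rcases eq_or_ne k a with rfl | hka
      · simp
      rcases eq_or_ne k b with rfl | hkb
      · exact ⟨-1, by simp⟩
      · simp [Equiv.swap_apply_of_ne_of_ne hka hkb]
    rw [map_mul, rename_X, show p * X k - rename (Equiv.swap a b) p * X (Equiv.swap a b k)
        = p * (X k - X (Equiv.swap a b k)) + (p - rename (Equiv.swap a b) p) * X (Equiv.swap a b k)
        by ring]
    exact dvd_add (hk.mul_left p) (hp.mul_right _)

lemma sub_rename_swap_eq_mul_demazure (a b : σ) (f : MvPolynomial σ ℚ) :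
    f - rename (Equiv.swap a b) f = (X a - X b) * demazure a b f := by
  have h : ∃ g, f - rename (Equiv.swap a b) f = (X a - X b) * g :=
    X_sub_X_dvd_sub_rename_swap a b f
  rw [demazure, dif_pos h]
  exact h.choose_spec

lemma demazure_eq_of_sub_rename_swap_eq {a b : σ} (hab : a ≠ b) {f g : MvPolynomial σ ℚ}
    (hg : f - rename (Equiv.swap a b) f = (X a - X b) * g) :
    demazure a b f = g :=
  mul_left_cancel₀ (X_sub_X_ne_zero hab) ((sub_rename_swap_eq_mul_demazure a b f).symm.trans hg)

lemma demazure_comm {a b : σ} (hab : a ≠ b) (f : MvPolynomial σ ℚ) :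
    demazure b a f = -demazure a b f := by
  refine demazure_eq_of_sub_rename_swap_eq hab.symm ?_
  rw [Equiv.swap_comm, sub_rename_swap_eq_mul_demazure a b f]
  ring

lemma demazure_neg {a b : σ} (hab : a ≠ b) (f : MvPolynomial σ ℚ) :
    demazure a b (-f) = -demazure a b f := by
  refine demazure_eq_of_sub_rename_swap_eq hab ?_
  rw [map_neg, ← neg_sub', sub_rename_swap_eq_mul_demazure a b f, mul_neg]

lemma rename_swap_demazure {a b : σ} (hab : a ≠ b) (f : MvPolynomial σ ℚ) :
    rename (Equiv.swap a b) (demazure a b f) = demazure a b f := by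
  have h := congrArg (rename (Equiv.swap a b)) (sub_rename_swap_eq_mul_demazure a b f)
  simp only [map_sub, map_mul, rename_X, Equiv.swap_apply_left, Equiv.swap_apply_right,
    rename_swap_rename_swap] at h
  exact (demazure_eq_of_sub_rename_swap_eq hab (by linear_combination -h)).symm

lemma demazure_of_rename_swap_eq {a b : σ} (hab : a ≠ b) {f : MvPolynomial σ ℚ}
    (hf : rename (Equiv.swap a b) f = f) : demazure a b f = 0 :=
  demazure_eq_of_sub_rename_swap_eq hab (by rw [hf]; ring)

lemma demazure_demazure {a b : σ} (hab : a ≠ b) (f : MvPolynomial σ ℚ) :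
    demazure a b (demazure a b f) = 0 :=
  demazure_of_rename_swap_eq hab (rename_swap_demazure hab f)

lemma demazure_demazure_comm {a b c d : σ} (hab : a ≠ b) (hcd : c ≠ d)
    (hac : a ≠ c) (had : a ≠ d) (hbc : b ≠ c) (hbd : b ≠ d) (f : MvPolynomial σ ℚ) :
    demazure a b (demazure c d f) = demazure c d (demazure a b f) := by
  symm
  apply demazure_eq_of_sub_rename_swap_eq hcd
  apply mul_left_cancel₀ (X_sub_X_ne_zero hab)
  have e1 := sub_rename_swap_eq_mul_demazure c d f
  have e2 := sub_rename_swap_eq_mul_demazure a b (demazure c d f)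
  have e3 := sub_rename_swap_eq_mul_demazure a b f
  have e1s := congrArg (rename (Equiv.swap a b)) e1
  have e3t := congrArg (rename (Equiv.swap c d)) e3
  simp only [map_sub, map_mul, rename_X, Equiv.swap_apply_of_ne_of_ne hac had,
    Equiv.swap_apply_of_ne_of_ne hbc hbd, Equiv.swap_apply_of_ne_of_ne hac.symm hbc.symm,
    Equiv.swap_apply_of_ne_of_ne had.symm hbd.symm] at e1s e3t
  have hcomm : rename (Equiv.swap a b) (rename (Equiv.swap c d) f)
      = rename (Equiv.swap c d) (rename (Equiv.swap a b) f) := by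
    rw [rename_rename, rename_rename, ← Equiv.Perm.coe_mul, ← Equiv.Perm.coe_mul,
      (Equiv.Perm.disjoint_swap_swap (by simp [*])).commute.eq]
  linear_combination -e3 + e3t + (X c - X d) * e2 + e1 - e1s - hcomm

lemma mul_demazure_demazure_demazure {a b c : σ} (hab : a ≠ b) (hac : a ≠ c) (hbc : b ≠ c)
    (f : MvPolynomial σ ℚ) :
    (X a - X b) * (X a - X c) * (X b - X c) * demazure a b (demazure b c (demazure a b f))
      = f - rename (Equiv.swap a b) f - rename (Equiv.swap b c) f
        + rename (Equiv.swap b c) (rename (Equiv.swap a b) f)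
        + rename (Equiv.swap a b) (rename (Equiv.swap b c) f)
        - rename (Equiv.swap a b) (rename (Equiv.swap b c) (rename (Equiv.swap a b) f)) := by
  have e1 := sub_rename_swap_eq_mul_demazure a b f
  have e2 := sub_rename_swap_eq_mul_demazure b c (demazure a b f)
  have e3 := sub_rename_swap_eq_mul_demazure a b (demazure b c (demazure a b f))
  have e1t := congrArg (rename (Equiv.swap b c)) e1
  have e1ts := congrArg (rename (Equiv.swap a b)) e1t
  have e2s := congrArg (rename (Equiv.swap a b)) e2
  simp only [map_sub, map_mul, rename_X, Equiv.swap_apply_left, Equiv.swap_apply_right,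
    Equiv.swap_apply_of_ne_of_ne hab hac, Equiv.swap_apply_of_ne_of_ne hac.symm hbc.symm,
    rename_swap_demazure hab] at e1t e1ts e2s
  linear_combination -((X b - X c) * (X a - X c)) * e3 - (X a - X c) * e2
    + (X b - X c) * e2s - e1 + e1t - e1ts

/-- Multiplied by `(X a - X b) (X a - X c) (X b - X c)`, both sides become the alternating sum of
`f` over the permutations of `{a, b, c}`: the right side is the left one for `(c, b, a)`, since
`demazure b a = -demazure a b`. -/
lemma demazure_braid {a b c : σ} (hab : a ≠ b) (hac : a ≠ c) (hbc : b ≠ c)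
    (f : MvPolynomial σ ℚ) :
    demazure a b (demazure b c (demazure a b f))
      = demazure b c (demazure a b (demazure b c f)) := by
  have habc := mul_demazure_demazure_demazure hab hac hbc f
  have hcba := mul_demazure_demazure_demazure hbc.symm hac.symm hab.symm f
  simp only [demazure_comm hab, demazure_comm hbc, demazure_neg hab, demazure_neg hbc,
    Equiv.swap_comm c b, Equiv.swap_comm b a] at hcba
  have hbraid : rename (Equiv.swap a b) (rename (Equiv.swap b c) (rename (Equiv.swap a b) f))
      = rename (Equiv.swap b c) (rename (Equiv.swap a b) (rename (Equiv.swap b c) f)) := by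
    simp only [rename_rename, ← Equiv.Perm.coe_mul, ← mul_assoc]
    rw [Equiv.swap_mul_swap_mul_swap_braid hab hac hbc]
  apply mul_left_cancel₀ (mul_ne_zero (mul_ne_zero (X_sub_X_ne_zero hab) (X_sub_X_ne_zero hac))
    (X_sub_X_ne_zero hbc))
  linear_combination habc - hcba - hbraid

end Demazure

section AdjSwap

variable {n : ℕ} {i j : ℕ}

lemma adjSwap_eq (hi : i + 1 < n) : adjSwap n i = Equiv.swap ⟨i, by omega⟩ ⟨i + 1, hi⟩ :=
  dif_pos hi

lemma adjSwap_inv (hi : i + 1 < n) : (adjSwap n i)⁻¹ = adjSwap n i := by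
  rw [adjSwap_eq hi, Equiv.swap_inv]

lemma adjSwap_mul_adjSwap_mul (hi : i + 1 < n) (w : Equiv.Perm (Fin n)) :
    adjSwap n i * (adjSwap n i * w) = w := by
  rw [← mul_assoc, adjSwap_eq hi, Equiv.swap_mul_self, one_mul]

lemma adjSwap_mul_comm (hi : i + 1 < n) (hj : j + 1 < n) (hij : i + 2 ≤ j) :
    adjSwap n i * adjSwap n j = adjSwap n j * adjSwap n i := by
  rw [adjSwap_eq hi, adjSwap_eq hj]
  exact (Equiv.Perm.disjoint_swap_swap (by simp [Fin.ext_iff]; omega)).commute.eq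

lemma adjSwap_braid (hi : i + 2 < n) :
    adjSwap n i * adjSwap n (i + 1) * adjSwap n i
      = adjSwap n (i + 1) * adjSwap n i * adjSwap n (i + 1) := by
  rw [adjSwap_eq (by omega : i + 1 < n), adjSwap_eq hi]
  exact Equiv.swap_mul_swap_mul_swap_braid (by simp) (by simp; omega) (by simp)

lemma adjSwap_mul_inv_apply (hi : i + 1 < n) (w : Equiv.Perm (Fin n)) (x : Fin n) :
    (adjSwap n i * w)⁻¹ x = w⁻¹ (adjSwap n i x) := by
  rw [mul_inv_rev, adjSwap_inv hi, Equiv.Perm.mul_apply]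

lemma adjSwap_apply_left (hi : i + 1 < n) : adjSwap n i ⟨i, by omega⟩ = ⟨i + 1, hi⟩ := by
  rw [adjSwap_eq hi, Equiv.swap_apply_left]

lemma adjSwap_apply_right (hi : i + 1 < n) : adjSwap n i ⟨i + 1, hi⟩ = ⟨i, by omega⟩ := by
  rw [adjSwap_eq hi, Equiv.swap_apply_right]

lemma adjSwap_apply_of_ne (hi : i + 1 < n) {k : ℕ} (hk : k < n) (h₁ : k ≠ i) (h₂ : k ≠ i + 1) :
    adjSwap n i ⟨k, hk⟩ = ⟨k, hk⟩ := by
  rw [adjSwap_eq hi, Equiv.swap_apply_of_ne_of_ne] <;> simpa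

end AdjSwap

section Length

variable {n : ℕ} {i j : ℕ}

lemma permLen_one : permLen (1 : Equiv.Perm (Fin n)) = 0 := by
  rw [permLen, Finset.card_eq_zero, Finset.filter_eq_empty_iff]
  exact fun p _ h => lt_asymm h.1 h.2

lemma permLen_inv (w : Equiv.Perm (Fin n)) : permLen w⁻¹ = permLen w := by
  refine Finset.card_bij (fun p _ => (w⁻¹ p.2, w⁻¹ p.1)) ?_ ?_ ?_
  · simp only [Finset.mem_filter, Finset.mem_univ, true_and, Equiv.Perm.coe_inv,
      Equiv.apply_symm_apply]
    exact fun p hp => hp.symm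
  · simp only [Prod.mk.injEq, EmbeddingLike.apply_eq_iff_eq]
    exact fun p _ q _ h => Prod.ext h.2 h.1
  · simp only [Finset.mem_filter, Finset.mem_univ, true_and]
    exact fun q hq => ⟨(w q.2, w q.1), by simpa using hq.symm, by simp⟩

/-- The inversions of `sᵢ w` are those of `w` together with the pair of positions
`(w⁻¹ i, w⁻¹ (i + 1))`. -/
lemma permLen_adjSwap_mul_of_lt (hi : i + 1 < n) {w : Equiv.Perm (Fin n)}
    (hw : w⁻¹ ⟨i, by omega⟩ < w⁻¹ ⟨i + 1, hi⟩) :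
    permLen (adjSwap n i * w) = permLen w + 1 := by
  set a : Fin n := ⟨i, by omega⟩
  set b : Fin n := ⟨i + 1, hi⟩
  have hab : a ⋖ b := Fin.mk_covBy_mk_add_one hi
  have hpos : ∀ x y, w x = a → w y = b → x < y := by
    intro x y hx hy
    simpa [← hx, ← hy] using hw
  have hinv : (Finset.univ.filter fun p : Fin n × Fin n =>
        p.1 < p.2 ∧ (Equiv.swap a b * w) p.2 < (Equiv.swap a b * w) p.1)
      = insert (w⁻¹ a, w⁻¹ b) (Finset.univ.filter fun p : Fin n × Fin n =>
        p.1 < p.2 ∧ w p.2 < w p.1) := by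
    ext ⟨x, y⟩
    simp only [Finset.mem_filter]
    simp only [Finset.mem_insert, Finset.mem_filter, Finset.mem_univ, true_and,
      Equiv.Perm.mul_apply, Prod.mk.injEq, Equiv.Perm.eq_inv_iff_eq]
    rcases lt_trichotomy (w x) (w y) with h | h | h
    · have := Equiv.swap_lt_swap_iff_of_covBy hab h
      have := hpos x y
      grind
    · grind
    · have := Equiv.swap_lt_swap_iff_of_covBy hab h
      have := hpos y x
      grind
  unfold permLen
  rw [adjSwap_eq hi, hinv, Finset.card_insert_of_notMem]
  simpa using fun _ => hab.lt.le

lemma permLen_adjSwap_mul_of_gt (hi : i + 1 < n) {w : Equiv.Perm (Fin n)}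
    (hw : w⁻¹ ⟨i + 1, hi⟩ < w⁻¹ ⟨i, by omega⟩) :
    permLen (adjSwap n i * w) + 1 = permLen w := by
  have h := permLen_adjSwap_mul_of_lt hi (w := adjSwap n i * w)
    (by simpa [mul_inv_rev, adjSwap_inv hi, adjSwap_eq hi] using hw)
  rwa [adjSwap_mul_adjSwap_mul hi, eq_comm] at h

lemma permLen_adjSwap_mul_lt_iff (hi : i + 1 < n) {w : Equiv.Perm (Fin n)} :
    permLen (adjSwap n i * w) < permLen w ↔ w⁻¹ ⟨i + 1, hi⟩ < w⁻¹ ⟨i, by omega⟩ := by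
  rcases lt_trichotomy (w⁻¹ ⟨i, by omega⟩) (w⁻¹ ⟨i + 1, hi⟩) with h | h | h
  · have := permLen_adjSwap_mul_of_lt hi h
    exact iff_of_false (by omega) h.not_gt
  · simp at h
  · have := permLen_adjSwap_mul_of_gt hi h
    exact iff_of_true (by omega) h

lemma lt_permLen_adjSwap_mul_iff (hi : i + 1 < n) {w : Equiv.Perm (Fin n)} :
    permLen w < permLen (adjSwap n i * w) ↔ w⁻¹ ⟨i, by omega⟩ < w⁻¹ ⟨i + 1, hi⟩ := by
  rcases lt_trichotomy (w⁻¹ ⟨i, by omega⟩) (w⁻¹ ⟨i + 1, hi⟩) with h | h | h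
  · have := permLen_adjSwap_mul_of_lt hi h
    exact iff_of_true (by omega) h
  · simp at h
  · have := permLen_adjSwap_mul_of_gt hi h
    exact iff_of_false (by omega) h.not_gt

lemma permLen_adjSwap_mul_eq_or (hi : i + 1 < n) (w : Equiv.Perm (Fin n)) :
    permLen (adjSwap n i * w) = permLen w + 1 ∨ permLen (adjSwap n i * w) + 1 = permLen w := by
  rcases lt_trichotomy (w⁻¹ ⟨i, by omega⟩) (w⁻¹ ⟨i + 1, hi⟩) with h | h | h
  · exact .inl (permLen_adjSwap_mul_of_lt hi h)
  · simp at h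
  · exact .inr (permLen_adjSwap_mul_of_gt hi h)

lemma permLen_adjSwap_mul_le (i : ℕ) (w : Equiv.Perm (Fin n)) :
    permLen (adjSwap n i * w) ≤ permLen w + 1 := by
  by_cases hi : i + 1 < n
  · rcases permLen_adjSwap_mul_eq_or hi w with h | h <;> omega
  · simp [adjSwap, hi]

lemma permLen_adjSwap_mul_adjSwap_mul_add_two (hi : i + 1 < n) (hj : j + 1 < n)
    (hij : i + 2 ≤ j) {w : Equiv.Perm (Fin n)}
    (hdi : permLen (adjSwap n i * w) < permLen w) (hdj : permLen (adjSwap n j * w) < permLen w) :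
    permLen (adjSwap n j * (adjSwap n i * w)) + 2 = permLen w := by
  have h₁ := permLen_adjSwap_mul_of_gt hi ((permLen_adjSwap_mul_lt_iff hi).mp hdi)
  have h₂ := permLen_adjSwap_mul_of_gt hj (w := adjSwap n i * w) (by
    rw [adjSwap_mul_inv_apply hi, adjSwap_mul_inv_apply hi,
      adjSwap_apply_of_ne hi hj (by omega) (by omega),
      adjSwap_apply_of_ne hi (by omega) (by omega) (by omega)]
    exact (permLen_adjSwap_mul_lt_iff hj).mp hdj)
  omega

lemma permLen_adjSwap_mul_adjSwap_mul_adjSwap_mul_add_three (hi : i + 2 < n)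
    {w : Equiv.Perm (Fin n)} (hdi : permLen (adjSwap n i * w) < permLen w)
    (hdi' : permLen (adjSwap n (i + 1) * w) < permLen w) :
    permLen (adjSwap n i * (adjSwap n (i + 1) * (adjSwap n i * w))) + 3 = permLen w := by
  have hi' : i + 1 < n := by omega
  have d₁ := (permLen_adjSwap_mul_lt_iff hi').mp hdi
  have d₂ := (permLen_adjSwap_mul_lt_iff hi).mp hdi'
  have h₁ := permLen_adjSwap_mul_of_gt hi' d₁
  have h₂ := permLen_adjSwap_mul_of_gt hi (w := adjSwap n i * w) (by
    rw [adjSwap_mul_inv_apply hi', adjSwap_mul_inv_apply hi',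
      adjSwap_apply_of_ne hi' hi (by omega) (by omega), adjSwap_apply_right hi']
    exact d₂.trans d₁)
  have h₃ := permLen_adjSwap_mul_of_gt hi' (w := adjSwap n (i + 1) * (adjSwap n i * w)) (by
    rw [adjSwap_mul_inv_apply hi, adjSwap_mul_inv_apply hi', adjSwap_mul_inv_apply hi,
      adjSwap_mul_inv_apply hi', adjSwap_apply_left hi,
      adjSwap_apply_of_ne hi' hi (by omega) (by omega),
      adjSwap_apply_of_ne hi (by omega) (by omega) (by omega), adjSwap_apply_left hi']
    exact d₂)
  omega

end Length

section ReducedWord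

variable {n : ℕ} {i : ℕ} {w : Equiv.Perm (Fin n)} {l : List ℕ}

lemma permLen_prod_le_length (l : List ℕ) : permLen (l.map (adjSwap n)).prod ≤ l.length := by
  induction l with
  | nil => simp [permLen_one]
  | cons i l ih =>
    simpa using (permLen_adjSwap_mul_le i _).trans (Nat.add_le_add_right ih 1)

lemma IsReducedWord.of_length_le (hl : ∀ i ∈ l, i + 1 < n)
    (hw : (l.map (adjSwap n)).prod = w) (hlen : l.length ≤ permLen w) : IsReducedWord n w l :=
  ⟨hl, hw, le_antisymm hlen (hw ▸ permLen_prod_le_length l)⟩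

lemma IsReducedWord.cons {c : List ℕ} (hi : i + 1 < n) (hc : IsReducedWord n w c)
    (hlen : permLen (adjSwap n i * w) = permLen w + 1) :
    IsReducedWord n (adjSwap n i * w) (i :: c) := by
  obtain ⟨hl, hw, hc⟩ := hc
  refine .of_length_le ?_ (by simp [hw]) (by simp [hc, hlen])
  simpa [hi] using hl

lemma IsReducedWord.tail (h : IsReducedWord n w (i :: l)) :
    IsReducedWord n (adjSwap n i * w) l := by
  obtain ⟨hl, hw, hlen⟩ := h
  have hi : i + 1 < n := hl i (by simp)
  refine .of_length_le (fun j hj => hl j (by simp [hj])) ?_ ?_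
  · rw [← hw, List.map_cons, List.prod_cons, adjSwap_mul_adjSwap_mul hi]
  · have := permLen_adjSwap_mul_le i (adjSwap n i * w)
    rw [adjSwap_mul_adjSwap_mul hi] at this
    simp only [List.length_cons] at hlen
    omega

lemma IsReducedWord.permLen_adjSwap_mul_lt (h : IsReducedWord n w (i :: l)) :
    permLen (adjSwap n i * w) < permLen w := by
  have h₁ := h.2.2
  have h₂ := h.tail.2.2
  simp only [List.length_cons] at h₁
  omega

lemma exists_isReducedWord (w : Equiv.Perm (Fin n)) : ∃ l, IsReducedWord n w l := by
  induction h : permLen w using Nat.strong_induction_on generalizing w with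
  | _ r ih =>
  rcases eq_or_ne w 1 with rfl | hw
  · exact ⟨[], by simp, by simp, by simp [permLen_one]⟩
  obtain ⟨i, hi, hd⟩ := Equiv.Perm.exists_apply_add_one_lt_of_ne_one (inv_ne_one.mpr hw)
  have hlt := (permLen_adjSwap_mul_lt_iff hi).mpr (by simpa using hd)
  obtain ⟨l, hl⟩ := ih _ (h ▸ hlt) (adjSwap n i * w) rfl
  refine ⟨i :: l, ?_⟩
  have hdrop := (permLen_adjSwap_mul_eq_or hi w).resolve_left (by omega)
  have hcons := hl.cons hi (by rw [adjSwap_mul_adjSwap_mul hi]; omega)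
  rwa [adjSwap_mul_adjSwap_mul hi] at hcons

end ReducedWord

section DemazureX

variable {n : ℕ} {i j : ℕ}

lemma demAtX_eq (hi : i + 1 < n) :
    demAtX n i = demazure (Sum.inl ⟨i, by omega⟩) (Sum.inl ⟨i + 1, hi⟩) :=
  dif_pos hi

lemma demAtX_demAtX (hi : i + 1 < n) (f : MvPolynomial (Fin n ⊕ Fin n) ℚ) :
    demAtX n i (demAtX n i f) = 0 := by
  rw [demAtX_eq hi]
  exact demazure_demazure (by simp) f

lemma demAtX_comm (hi : i + 1 < n) (hj : j + 1 < n) (hij : i + 2 ≤ j)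
    (f : MvPolynomial (Fin n ⊕ Fin n) ℚ) :
    demAtX n i (demAtX n j f) = demAtX n j (demAtX n i f) := by
  rw [demAtX_eq hi, demAtX_eq hj]
  exact demazure_demazure_comm (by simp) (by simp) (by simp; omega) (by simp; omega)
    (by simp; omega) (by simp; omega) f

lemma demAtX_braid (hi : i + 2 < n) (f : MvPolynomial (Fin n ⊕ Fin n) ℚ) :
    demAtX n i (demAtX n (i + 1) (demAtX n i f))
      = demAtX n (i + 1) (demAtX n i (demAtX n (i + 1) f)) := by
  rw [demAtX_eq (by omega : i + 1 < n), demAtX_eq hi]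
  exact demazure_braid (by simp) (by simp; omega) (by simp) f

lemma demWordX_cons (i : ℕ) (l : List ℕ) : demWordX n (i :: l) = demAtX n i ∘ demWordX n l :=
  rfl

end DemazureX

section WordIndependence

variable {n : ℕ} {i j : ℕ} {w : Equiv.Perm (Fin n)}

lemma IsReducedWord.append {v : Equiv.Perm (Fin n)} {c d : List ℕ} (hc : IsReducedWord n v c)
    (hd : ∀ i ∈ d, i + 1 < n) (hw : (d.map (adjSwap n)).prod * v = w)
    (hlen : d.length + permLen v ≤ permLen w) : IsReducedWord n w (d ++ c) := by
  refine .of_length_le ?_ (by rw [List.map_append, List.prod_append, hc.2.1, hw]) ?_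
  · simpa [or_imp, forall_and] using ⟨hd, hc.1⟩
  · simpa [hc.2.2] using hlen

lemma exists_isReducedWord_cons_demWordX_eq (hi : i + 1 < n) (hj : j + 1 < n) (hij : i ≠ j)
    (hdi : permLen (adjSwap n i * w) < permLen w) (hdj : permLen (adjSwap n j * w) < permLen w) :
    ∃ p q, IsReducedWord n w (i :: p) ∧ IsReducedWord n w (j :: q) ∧
      demWordX n (i :: p) = demWordX n (j :: q) := by
  wlog hlt : i < j generalizing i j
  · obtain ⟨q, p, hq, hp, h⟩ := this hj hi hij.symm hdj hdi (by omega)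
    exact ⟨p, q, hp, hq, h.symm⟩
  obtain rfl | hij₂ : j = i + 1 ∨ i + 2 ≤ j := by omega
  · have hv := permLen_adjSwap_mul_adjSwap_mul_adjSwap_mul_add_three hj hdi hdj
    obtain ⟨c, hc⟩ :=
      exists_isReducedWord (adjSwap n i * (adjSwap n (i + 1) * (adjSwap n i * w)))
    refine ⟨(i + 1) :: i :: c, i :: (i + 1) :: c, hc.append (d := [i, i + 1, i]) ?_ ?_ ?_,
      hc.append (d := [i + 1, i, i + 1]) ?_ ?_ ?_, funext fun f => demAtX_braid hj _⟩
    all_goals simp only [List.mem_cons, List.not_mem_nil, List.length_cons, List.length_nil,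
      List.map_cons, List.map_nil, List.prod_cons, List.prod_nil, mul_one]
    · grind
    · simp only [mul_assoc, adjSwap_mul_adjSwap_mul hi, adjSwap_mul_adjSwap_mul hj]
    · omega
    · grind
    · simp only [← mul_assoc]
      rw [← adjSwap_braid hj]
      simp only [mul_assoc, adjSwap_mul_adjSwap_mul hi, adjSwap_mul_adjSwap_mul hj]
    · omega
  · have hv := permLen_adjSwap_mul_adjSwap_mul_add_two hi hj hij₂ hdi hdj
    obtain ⟨c, hc⟩ := exists_isReducedWord (adjSwap n j * (adjSwap n i * w))
    refine ⟨j :: c, i :: c, hc.append (d := [i, j]) ?_ ?_ ?_, hc.append (d := [j, i]) ?_ ?_ ?_,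
      funext fun f => demAtX_comm hi hj hij₂ _⟩
    all_goals simp only [List.mem_cons, List.not_mem_nil, List.length_cons, List.length_nil,
      List.map_cons, List.map_nil, List.prod_cons, List.prod_nil, mul_one]
    · grind
    · simp only [mul_assoc, adjSwap_mul_adjSwap_mul hi, adjSwap_mul_adjSwap_mul hj]
    · omega
    · grind
    · rw [← adjSwap_mul_comm hi hj hij₂]
      simp only [mul_assoc, adjSwap_mul_adjSwap_mul hi, adjSwap_mul_adjSwap_mul hj]
    · omega

theorem demWordX_eq_of_isReducedWord {l l' : List ℕ} (hl : IsReducedWord n w l)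
    (hl' : IsReducedWord n w l') : demWordX n l = demWordX n l' := by
  induction h : permLen w using Nat.strong_induction_on generalizing w l l' with
  | _ r ih =>
  rcases l with _ | ⟨i, a⟩ <;> rcases l' with _ | ⟨j, b⟩
  · rfl
  · simpa using hl.2.2.trans hl'.2.2.symm
  · simpa using hl.2.2.trans hl'.2.2.symm
  have hi := hl.permLen_adjSwap_mul_lt
  have hj := hl'.permLen_adjSwap_mul_lt
  rcases eq_or_ne i j with rfl | hij
  · rw [demWordX_cons, demWordX_cons, ih _ (h ▸ hi) hl.tail hl'.tail rfl]
  obtain ⟨p, q, hp, hq, hpq⟩ :=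
    exists_isReducedWord_cons_demWordX_eq (hl.1 i (by simp)) (hl'.1 j (by simp)) hij hi hj
  calc demWordX n (i :: a) = demWordX n (i :: p) := by
        rw [demWordX_cons, demWordX_cons, ih _ (h ▸ hi) hl.tail hp.tail rfl]
    _ = demWordX n (j :: q) := hpq
    _ = demWordX n (j :: b) := by
        rw [demWordX_cons, demWordX_cons, ih _ (h ▸ hj) hq.tail hl'.tail rfl]

lemma demazureOfX_eq_demWordX {l : List ℕ} (hl : IsReducedWord n w l) :
    demazureOfX n w = demWordX n l := by
  have h : ∃ l, IsReducedWord n w l := ⟨l, hl⟩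
  rw [demazureOfX, dif_pos h]
  exact demWordX_eq_of_isReducedWord h.choose_spec hl

end WordIndependence

section Schubert

variable {n : ℕ} {i : ℕ}

lemma permLen_mul_adjSwap_lt_iff (hi : i + 1 < n) (w : Equiv.Perm (Fin n)) :
    permLen (w * adjSwap n i) < permLen w ↔
      permLen (w⁻¹ * w0 n) < permLen (adjSwap n i * (w⁻¹ * w0 n)) := by
  rw [← permLen_inv (w * adjSwap n i), ← permLen_inv w, mul_inv_rev, adjSwap_inv hi,
    permLen_adjSwap_mul_lt_iff hi, inv_inv, lt_permLen_adjSwap_mul_iff hi]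
  simp [w0, Fin.rev_lt_rev]

lemma schubert_eq_demWordX {w : Equiv.Perm (Fin n)} {l : List ℕ}
    (hl : IsReducedWord n (w⁻¹ * w0 n) l) : schubert n w = demWordX n l (schubProd n) := by
  rw [schubert, demazureOfX_eq_demWordX hl]

end Schubert

theorem demazure_schubert_general (n : ℕ) (w : Equiv.Perm (Fin n))
    (i : ℕ) (hi : i + 1 < n) :
    (permLen (w * adjSwap n i) + 1 = permLen w →
      demAtX n i (schubert n w) = schubert n (w * adjSwap n i)) ∧
    (permLen (w * adjSwap n i) = permLen w + 1 →
      demAtX n i (schubert n w) = 0) := by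
  have hu : (w * adjSwap n i)⁻¹ * w0 n = adjSwap n i * (w⁻¹ * w0 n) := by
    rw [mul_inv_rev, adjSwap_inv hi, mul_assoc]
  have hlen := permLen_mul_adjSwap_lt_iff hi w
  have hcases := permLen_adjSwap_mul_eq_or hi (w⁻¹ * w0 n)
  constructor
  · intro hdrop
    obtain ⟨l, hl⟩ := exists_isReducedWord (w⁻¹ * w0 n)
    have hup := hcases.resolve_right (by have := hlen.mp (by omega); omega)
    rw [schubert_eq_demWordX hl, schubert_eq_demWordX (hu ▸ hl.cons hi hup)]
    rfl
  · intro hrise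
    have hdown := hcases.resolve_left (fun h => by have := hlen.mpr (by omega); omega)
    obtain ⟨c, hc⟩ := exists_isReducedWord (adjSwap n i * (w⁻¹ * w0 n))
    have hic := hc.cons hi (by rw [adjSwap_mul_adjSwap_mul hi]; omega)
    rw [adjSwap_mul_adjSwap_mul hi] at hic
    rw [schubert_eq_demWordX hic, demWordX_cons]
    exact demAtX_demAtX hi _

/-- The Demazure operators act on double Schubert polynomials by
`∂ᵢˣ 𝔖_w = 𝔖_{w sᵢ}` if `ℓ(w sᵢ) = ℓ(w) - 1`, and `∂ᵢˣ 𝔖_w = 0` if `ℓ(w sᵢ) = ℓ(w) + 1`. -/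
theorem demazure_schubert (n : ℕ) (hn : 1 ≤ n) (w : Equiv.Perm (Fin n))
    (i : ℕ) (hi : i + 1 < n) :
    (permLen (w * adjSwap n i) + 1 = permLen w →
      demAtX n i (schubert n w) = schubert n (w * adjSwap n i)) ∧
    (permLen (w * adjSwap n i) = permLen w + 1 →
      demAtX n i (schubert n w) = 0) :=
  demazure_schubert_general n w i hi
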